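/- arXiv:1306.2669 — 6 statements merged into one kernel-verified Lean document; each statement's English description precedes it below -/
import Mathlib

section
/- Let G be a field of characteristic p > 0 and let M/G be a finite separable field extension. Let α ∈ M and let a be a positive integer. If every coefficient of the monic irreducible (minimal) polynomial of α over G is a p^a-th power of an element of G, then α is a p^a-th power of an element of M. -/
/-! Write `q = p ^ n` and `f = minpoly K α = g^φ`, where `φ = (· ^ q)` is applied to the
coefficients of `g`. In `K[X]/(g)` the element `x = root g` satisfies `f(x ^ q) = g(x) ^ q = 0`,
so `root f ↦ x ^ q` defines a `K`-algebra map `K[X]/(f) → K[X]/(g)`. It is injective since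
`K[X]/(f)` is a field, hence bijective as both sides have dimension `deg f = deg g`; pulling `x`
back gives a `q`-th root of `root f`, which is then sent to `α`. -/

open Polynomial

namespace Polynomial

theorem exists_map_iterateFrobenius_eq {K : Type*} [CommSemiring K] (p : ℕ) [ExpChar K p] (n : ℕ)
    {f : K[X]} (hf : ∀ i, ∃ c : K, f.coeff i = c ^ p ^ n) :
    ∃ g : K[X], g.map (iterateFrobenius K p n) = f :=
  (mem_map_rangeS _).mpr fun i ↦ (hf i).imp fun _ hc ↦ hc.symm

theorem aeval_pow_map_iterateFrobenius {K A : Type*} [CommSemiring K] [CommSemiring A] [Algebra K A]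
    (p : ℕ) [ExpChar K p] [ExpChar A p] (n : ℕ) (g : K[X]) (x : A) :
    aeval (x ^ p ^ n) (g.map (iterateFrobenius K p n)) = aeval x g ^ p ^ n := by
  have hcomm : (algebraMap K A).comp (iterateFrobenius K p n) =
      (iterateFrobenius A p n).comp (algebraMap K A) := by
    ext c
    simp [iterateFrobenius_def]
  rw [aeval_def, eval₂_map, hcomm, ← iterateFrobenius_def, ← iterateFrobenius_def, ← hom_eval₂,
    aeval_def]

end Polynomial

namespace AdjoinRoot

theorem exists_root_eq_pow_of_map_iterateFrobenius_eq {K : Type*} [Field K] (p : ℕ) [ExpChar K p]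
    (n : ℕ) {f g : K[X]} (hf : Irreducible f) (hgf : g.map (iterateFrobenius K p n) = f) :
    ∃ y : AdjoinRoot f, root f = y ^ p ^ n := by
  have := Fact.mk hf
  have hg : g ≠ 0 := by rintro rfl; exact hf.ne_zero (by simp [← hgf])
  have hdeg : g.natDegree = f.natDegree := by
    rw [← hgf, natDegree_map_eq_of_injective (iterateFrobenius K p n).injective]
  have : Nontrivial (AdjoinRoot g) := AdjoinRoot.nontrivial g <| by
    rw [degree_eq_natDegree hg, hdeg, Nat.cast_ne_zero]
    exact (natDegree_pos_iff_degree_pos.mpr (degree_pos_of_irreducible hf)).ne'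
  have : ExpChar (AdjoinRoot g) p := expChar_of_injective_algebraMap (algebraMap K _).injective p
  have := (powerBasis hg).finite
  have := (powerBasis hf.ne_zero).finite
  let ψ : AdjoinRoot f →ₐ[K] AdjoinRoot g := liftAlgHom f (Algebra.ofId K _) (root g ^ p ^ n) <| by
    change aeval _ f = 0
    rw [← hgf, aeval_pow_map_iterateFrobenius, aeval_eq, mk_self,
      zero_pow (expChar_pow_pos K p n).ne']
  have hinj : Function.Injective ψ := ψ.toRingHom.injective
  have hsurj : Function.Surjective ψ :=
    (LinearMap.injective_iff_surjective_of_finrank_eq_finrank (f := ψ.toLinearMap) <| by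
      rw [(powerBasis hf.ne_zero).finrank, (powerBasis hg).finrank, powerBasis_dim, powerBasis_dim,
        hdeg]).mp hinj
  obtain ⟨y, hy⟩ := hsurj (root g)
  refine ⟨y, hinj ?_⟩
  rw [map_pow, hy]
  exact liftAlgHom_root _ _ _ _

end AdjoinRoot

theorem exists_eq_pow_of_coeff_minpoly_eq_pow {K L : Type*} [Field K] [Field L] [Algebra K L]
    (p : ℕ) [ExpChar K p] (n : ℕ) {α : L} (hα : IsIntegral K α)
    (hcoeff : ∀ i, ∃ c : K, (minpoly K α).coeff i = c ^ p ^ n) : ∃ β : L, α = β ^ p ^ n := by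
  obtain ⟨g, hg⟩ := exists_map_iterateFrobenius_eq p n hcoeff
  obtain ⟨y, hy⟩ :=
    AdjoinRoot.exists_root_eq_pow_of_map_iterateFrobenius_eq p n (minpoly.irreducible hα) hg
  refine ⟨AdjoinRoot.liftAlgHom _ (Algebra.ofId K L) α (minpoly.aeval K α) y, ?_⟩
  rw [← map_pow, ← hy]
  exact (AdjoinRoot.liftAlgHom_root _ _ _ _).symm

theorem stmt_3_general {G M : Type*} [Field G] [Field M] [Algebra G M]
    (p : ℕ) (hp : p.Prime) [CharP G p]
    [FiniteDimensional G M]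
    (α : M) (a : ℕ)
    (hcoeff : ∀ i : ℕ, ∃ c : G, (minpoly G α).coeff i = c ^ p ^ a) :
    ∃ β : M, α = β ^ p ^ a :=
  have : ExpChar G p := .prime hp
  exists_eq_pow_of_coeff_minpoly_eq_pow p a (.of_finite G α) hcoeff

/-- Let `M/G` be a finite separable extension of fields of characteristic `p > 0` and
let `a ≥ 1`. If every coefficient of the minimal polynomial of `α ∈ M` over `G` is a
`p^a`-th power in `G`, then `α` is a `p^a`-th power in `M`. -/
theorem stmt_3 {G M : Type*} [Field G] [Field M] [Algebra G M]
    (p : ℕ) (hp : p.Prime) [CharP G p]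
    [FiniteDimensional G M] [Algebra.IsSeparable G M]
    (α : M) (a : ℕ) (ha : 1 ≤ a)
    (hcoeff : ∀ i : ℕ, ∃ c : G, (minpoly G α).coeff i = c ^ p ^ a) :
    ∃ β : M, α = β ^ p ^ a :=
  stmt_3_general p hp α a hcoeff
end

section
/- Let G be a field of characteristic p > 0 and let M/G be a finite separable extension of degree n with M = G(x) for some x ∈ M. Let r be a positive integer. Suppose there exist pairwise distinct elements b_0, …, b_n ∈ G and elements y_0, …, y_n ∈ G such that N_{M/G}(b_i^{p^r} − x) = y_i^{p^r} for every i = 0, …, n. Then x is a p^r-th power of an element of M. -/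
open Polynomial IntermediateField Module

lemma norm_algebraMap_sub_eq_eval' {G M : Type*} [Field G] [Field M] [Algebra G M]
    [FiniteDimensional G M] (x : M) (hx : IntermediateField.adjoin G {x} = ⊤) (c : G) :
    Algebra.norm G (algebraMap G M c - x) = (minpoly G x).eval c := by
  have hxi : IsIntegral G x := IsIntegral.of_finite G x
  set w : M := algebraMap G M c - x with hwdef
  have hwi : IsIntegral G w := IsIntegral.of_finite G w
  have hxw : x = algebraMap G M c - w := by ring
  have hw : IntermediateField.adjoin G {w} = ⊤ := by
    refine le_antisymm le_top ?_
    rw [← hx, IntermediateField.adjoin_le_iff]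
    intro t ht
    rcases Set.mem_singleton_iff.mp ht with rfl
    rw [hxw]
    exact sub_mem (IntermediateField.algebraMap_mem _ c)
      (IntermediateField.mem_adjoin_simple_self G w)
  have finrank_adjoin : ∀ (v : M), IntermediateField.adjoin G {v} = ⊤ →
      (minpoly G v).natDegree = Module.finrank G M := by
    intro v hv
    have h1 := IntermediateField.adjoin.finrank (IsIntegral.of_finite G v)
    have e : G⟮v⟯ ≃ₐ[G] M := (IntermediateField.equivOfEq hv).trans IntermediateField.topEquiv
    rw [e.toLinearEquiv.finrank_eq] at h1
    omega
  have hdw : (minpoly G w).natDegree = Module.finrank G M := finrank_adjoin w hw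
  have hdx : (minpoly G x).natDegree = Module.finrank G M := finrank_adjoin x hx
  let e : G⟮w⟯ ≃ₐ[G] M := (IntermediateField.equivOfEq hw).trans IntermediateField.topEquiv
  let pb : PowerBasis G M := (IntermediateField.adjoin.powerBasis hwi).map e
  have hgen : pb.gen = w := rfl
  have hdim : pb.dim = (minpoly G w).natDegree := by
    simp [pb, IntermediateField.adjoin.powerBasis]
  have hnorm := Algebra.PowerBasis.norm_gen_eq_coeff_zero_minpoly pb
  rw [hgen, hdim] at hnorm
  have hwneg : w = -(x - algebraMap G M c) := by ring
  have hmp : minpoly G w =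
      (-1) ^ (minpoly G (x - algebraMap G M c)).natDegree *
        ((minpoly G (x - algebraMap G M c)).comp (-X)) := by
    rw [hwneg, minpoly.neg]
  have hsub : minpoly G (x - algebraMap G M c) = (minpoly G x).comp (X + C c) :=
    minpoly.sub_algebraMap x c
  have hcoeff : (minpoly G w).coeff 0 = (-1) ^ (minpoly G x).natDegree * (minpoly G x).eval c := by
    rw [hmp, hsub]
    rw [coeff_zero_eq_eval_zero, natDegree_comp]
    simp [eval_comp]
  rw [hnorm, hcoeff, hdw, hdx]
  rw [← mul_assoc, ← mul_pow]
  simp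

/-- Let `M = G(x)` be a finite separable extension of degree `n` of a field `G` of
characteristic `p > 0`, and `r ≥ 1`. If there are pairwise distinct `b_0, …, b_n ∈ G`
and `y_0, …, y_n ∈ G` with `N_{M/G}(b_i^{p^r} - x) = y_i^{p^r}` for all `i`, then `x`
is a `p^r`-th power in `M`. -/
theorem stmt_4 {G M : Type*} [Field G] [Field M] [Algebra G M]
    (p : ℕ) (hp : p.Prime) [CharP G p]
    [FiniteDimensional G M] [Algebra.IsSeparable G M]
    (n : ℕ) (hn : Module.finrank G M = n)
    (x : M) (hx : IntermediateField.adjoin G {x} = ⊤)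
    (r : ℕ) (hr : 1 ≤ r)
    (b y : Fin (n + 1) → G) (hb : Function.Injective b)
    (hnorm : ∀ i, Algebra.norm G (algebraMap G M (b i ^ p ^ r) - x) = y i ^ p ^ r) :
    ∃ z : M, x = z ^ p ^ r := by
  haveI := Fact.mk hp
  haveI : ExpChar G p := ExpChar.prime hp
  have hxi : IsIntegral G x := IsIntegral.of_finite G x
  set q := p ^ r with hq
  set f := minpoly G x with hfdef
  have hfmonic : f.Monic := minpoly.monic hxi
  have hfd : f.natDegree = n := by
    have h1 := IntermediateField.adjoin.finrank hxi
    have e : G⟮x⟯ ≃ₐ[G] M := (IntermediateField.equivOfEq hx).trans IntermediateField.topEquiv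
    rw [e.toLinearEquiv.finrank_eq] at h1
    rw [← h1, ← hn]
  -- Frobenius on G
  set ψ : G →+* G := iterateFrobenius G p r with hψdef
  have hψ : ∀ a : G, ψ a = a ^ q := fun a => rfl
  have hψinj : Function.Injective ψ := ψ.injective
  -- interpolation
  set s : Finset (Fin (n + 1)) := Finset.univ with hsdef
  have hscard : s.card = n + 1 := by simp [hsdef]
  have hbinj : Set.InjOn b s := hb.injOn
  have hψbinj : Set.InjOn (ψ ∘ b) s := (hψinj.comp hb).injOn
  set F : G[X] := Lagrange.interpolate s b y with hFdef
  have h1 : f = Lagrange.interpolate s (ψ ∘ b) (ψ ∘ y) := by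
    refine Lagrange.eq_interpolate_of_eval_eq _ hψbinj ?_ ?_
    · rw [degree_eq_natDegree hfmonic.ne_zero, hfd, hscard]
      exact_mod_cast Nat.lt_succ_self n
    · intro i _
      simp only [Function.comp_apply, hψ]
      rw [← norm_algebraMap_sub_eq_eval' x hx, hnorm i]
  have h2 : F.map ψ = Lagrange.interpolate s (ψ ∘ b) (ψ ∘ y) := by
    refine Lagrange.eq_interpolate_of_eval_eq _ hψbinj ?_ ?_
    · exact lt_of_le_of_lt degree_map_le (Lagrange.degree_interpolate_lt y hbinj)
    · intro i hi
      simp only [Function.comp_apply]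
      rw [eval_map, eval₂_hom, Lagrange.eval_interpolate_at_node y hbinj hi]
  have hFf : f = F.map ψ := h1.trans h2.symm
  have hFdn : F.natDegree = n := by
    have := congrArg natDegree hFf
    rwa [natDegree_map_eq_of_injective hψinj, hfd, eq_comm] at this
  have hFmon : F.Monic := by
    have h3 : ψ (F.coeff n) = ψ 1 := by
      rw [← coeff_map, ← hFf, ← hfd, hfmonic.coeff_natDegree, map_one]
    have : F.coeff n = 1 := hψinj h3
    rwa [Monic, leadingCoeff, hFdn]
  -- algebraic closure
  set A := AlgebraicClosure M with hAdef
  haveI : CharP M p := charP_of_injective_algebraMap (algebraMap G M).injective p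
  haveI : CharP A p := charP_of_injective_algebraMap (algebraMap M A).injective p
  haveI : ExpChar A p := ExpChar.prime hp
  obtain ⟨z, hz⟩ := (bijective_iterateFrobenius A p r).2 (algebraMap M A x)
  rw [iterateFrobenius_def] at hz
  have hzq : z ^ q = algebraMap M A x := by rw [hq]; exact hz
  set φ : A →+* A := iterateFrobenius A p r with hφdef
  have hφ : ∀ a : A, φ a = a ^ q := fun a => rfl
  have hcomm : φ.comp (algebraMap G A) = (algebraMap G A).comp ψ := by
    ext a
    simp [hφ, hψ, map_pow]
  have hroot : Polynomial.aeval z F = 0 := by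
    have h3 : (Polynomial.aeval z F) ^ q = 0 := by
      calc (Polynomial.aeval z F) ^ q = φ (Polynomial.aeval z F) := (hφ _).symm
        _ = eval₂ (φ.comp (algebraMap G A)) (φ z) F := by rw [aeval_def, hom_eval₂]
        _ = eval₂ ((algebraMap G A).comp ψ) (algebraMap M A x) F := by
            rw [hcomm, hφ, hzq]
        _ = eval₂ (algebraMap G A) (algebraMap M A x) (F.map ψ) := (eval₂_map ψ _ _).symm
        _ = Polynomial.aeval (algebraMap M A x) f := by rw [← hFf, aeval_def]
        _ = algebraMap M A (Polynomial.aeval x f) := by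
            rw [Polynomial.aeval_algebraMap_apply]
        _ = 0 := by rw [hfdef, minpoly.aeval, map_zero]
    exact pow_eq_zero_iff (pow_ne_zero r hp.ne_zero) |>.mp h3
  have hzint : IsIntegral G z := ⟨F, hFmon, by rwa [← aeval_def]⟩
  have hzdeg : (minpoly G z).natDegree ≤ n := by
    have hdvd := minpoly.dvd G z hroot
    calc (minpoly G z).natDegree ≤ F.natDegree := natDegree_le_of_dvd hdvd hFmon.ne_zero
      _ = n := hFdn
  -- intermediate fields
  have hx'i : IsIntegral G ((algebraMap M A) x) := by
    have := hxi.map (IsScalarTower.toAlgHom G M A)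
    simpa using this
  set K1 := IntermediateField.adjoin G {(algebraMap M A) x} with hK1def
  set K2 := IntermediateField.adjoin G {z} with hK2def
  haveI : FiniteDimensional G K1 := IntermediateField.adjoin.finiteDimensional hx'i
  haveI : FiniteDimensional G K2 := IntermediateField.adjoin.finiteDimensional hzint
  have hK1rank : finrank G K1 = n := by
    rw [hK1def, IntermediateField.adjoin.finrank hx'i,
      minpoly.algebraMap_eq (algebraMap M A).injective, ← hfdef, hfd]
  have hK2rank : finrank G K2 ≤ n := by
    rw [hK2def, IntermediateField.adjoin.finrank hzint]
    exact hzdeg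
  have hle : K1 ≤ K2 := by
    rw [hK1def, IntermediateField.adjoin_le_iff]
    intro t ht
    rcases Set.mem_singleton_iff.mp ht with rfl
    rw [← hzq]
    exact pow_mem (IntermediateField.mem_adjoin_simple_self G z) _
  have heq : K1 = K2 :=
    IntermediateField.eq_of_le_of_finrank_le hle (by rw [hK1rank]; exact hK2rank)
  have hzK1 : z ∈ K1 := heq ▸ IntermediateField.mem_adjoin_simple_self G z
  have hK1le : K1 ≤ (IsScalarTower.toAlgHom G M A).fieldRange := by
    rw [hK1def, IntermediateField.adjoin_le_iff]
    intro t ht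
    rcases Set.mem_singleton_iff.mp ht with rfl
    exact ⟨x, by simp⟩
  obtain ⟨w, hw⟩ := hK1le hzK1
  refine ⟨w, ?_⟩
  have : algebraMap M A (w ^ q) = algebraMap M A x := by
    rw [map_pow]
    have hw' : algebraMap M A w = z := by simpa using hw
    rw [hw', hzq]
  exact ((algebraMap M A).injective this).symm
end

section
/- Let F be an algebraically closed field of characteristic p > 2 and let M be a function field over F. Let t ∈ M be transcendental over F and not a p-th power in M (so M/F(t) is separable). Let x ∈ M, set u = (x^p + t)/(x^p − t), and let b ∈ F with b ≠ 1 and b ≠ −1. Then for every prime v of M that is unramified over F(t) and satisfies v(t) = 0, one has v(u + b) ∈ {−1, 0, 1} and v(u^{−1} + b) ∈ {−1, 0, 1}. (Here x^p − t ≠ 0, x^p + t ≠ 0, u + b ≠ 0 and u^{−1} + b ≠ 0 automatically, since t is not a p-th power in M and F is algebraically closed.) -/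
/-- A prime of a function field `M` over a constant field `F`: a surjective additive
valuation `M → ℤ` that is trivial on `F`. -/
structure FFPrime (F M : Type*) [Field F] [Field M] [Algebra F M] where
  v : M → ℤ
  map_mul : ∀ x y : M, x ≠ 0 → y ≠ 0 → v (x * y) = v x + v y
  add_min : ∀ x y : M, x ≠ 0 → y ≠ 0 → x + y ≠ 0 → min (v x) (v y) ≤ v (x + y)
  surj : ∀ n : ℤ, ∃ x : M, x ≠ 0 ∧ v x = n
  triv : ∀ c : F, c ≠ 0 → v (algebraMap F M c) = 0

/-- A prime of `M` is unramified over `F(t)` if some nonzero element of `F(t)` has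
valuation `1`. -/
def FFPrime.UnramifiedOver {F M : Type*} [Field F] [Field M] [Algebra F M]
    (P : FFPrime F M) (t : M) : Prop :=
  ∃ r : M, r ∈ IntermediateField.adjoin F {t} ∧ r ≠ 0 ∧ P.v r = 1

/-!
As `F` is algebraically closed, the valuation of every element of `F(t)` is an integer
combination of the `v (t - c)`, so an unramified prime with `v t = 0` has a uniformizer `t - a`.
Then `x ^ p + c t` (for `c ≠ 0`) is `(x - e) ^ p + c (t - a)` with `e ^ p = -c a`, of valuation
at most `1`: it is `p v x` if `v x < 0` and lies in `{0, 1}` otherwise. Finally `u + b` and `u⁻¹ + b` are quotients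
`(1 + b) (x ^ p + c t) / (x ^ p ± t)` with `c ≠ 0` because `b ≠ ±1`.
-/

open Polynomial IntermediateField

theorem Transcendental.sub_algebraMap_ne_zero {F M : Type*} [Field F] [Field M] [Algebra F M]
    {t : M} (ht : Transcendental F t) (c : F) : t - algebraMap F M c ≠ 0 := by
  rw [sub_ne_zero]
  rintro rfl
  exact ht (isAlgebraic_algebraMap c)

/-- `x ^ p + c * t = 0` would make `t = (x * d) ^ p` with `d ^ p = -c⁻¹`. -/
theorem pow_add_algebraMap_mul_ne_zero {F M : Type*} [Field F] [Field M] [Algebra F M]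
    [IsAlgClosed F] {p : ℕ} (hp : 0 < p) {t : M} (hnp : ¬∃ c : M, c ^ p = t) (x : M) {c : F}
    (hc : c ≠ 0) : x ^ p + algebraMap F M c * t ≠ 0 := by
  intro h
  obtain ⟨d, hd⟩ := IsAlgClosed.exists_pow_nat_eq (-c⁻¹) hp
  refine hnp ⟨x * algebraMap F M d, ?_⟩
  have hc' : algebraMap F M c ≠ 0 := (_root_.map_ne_zero _).2 hc
  rw [mul_pow, eq_neg_of_add_eq_zero_left h, ← map_pow, hd, map_neg, map_inv₀]
  field_simp

namespace FFPrime

variable {F M : Type*} [Field F] [Field M] [Algebra F M] (P : FFPrime F M)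

theorem v_one : P.v 1 = 0 := by
  have h := P.map_mul 1 1 one_ne_zero one_ne_zero
  rw [one_mul] at h
  omega

theorem v_neg {x : M} (hx : x ≠ 0) : P.v (-x) = P.v x := by
  have h : P.v (-x * -x) = P.v (x * x) := by rw [neg_mul_neg]
  rw [P.map_mul _ _ (neg_ne_zero.2 hx) (neg_ne_zero.2 hx), P.map_mul _ _ hx hx] at h
  omega

theorem v_inv {x : M} (hx : x ≠ 0) : P.v x⁻¹ = -P.v x := by
  have h := P.map_mul x x⁻¹ hx (inv_ne_zero hx)
  rw [mul_inv_cancel₀ hx, v_one] at h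
  omega

theorem v_div {x y : M} (hx : x ≠ 0) (hy : y ≠ 0) : P.v (x / y) = P.v x - P.v y := by
  rw [div_eq_mul_inv, P.map_mul x y⁻¹ hx (inv_ne_zero hy), P.v_inv hy, sub_eq_add_neg]

theorem v_pow {x : M} (hx : x ≠ 0) (n : ℕ) : P.v (x ^ n) = n * P.v x := by
  induction n with
  | zero => simp [v_one]
  | succ n ih =>
    rw [pow_succ, P.map_mul _ x (pow_ne_zero n hx) hx, ih]
    push_cast
    ring

theorem v_algebraMap_mul {c : F} (hc : c ≠ 0) {x : M} (hx : x ≠ 0) :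
    P.v (algebraMap F M c * x) = P.v x := by
  rw [P.map_mul _ _ ((_root_.map_ne_zero _).2 hc) hx, P.triv c hc, zero_add]

theorem v_add_of_lt {x y : M} (hx : x ≠ 0) (hy : y ≠ 0) (h : P.v x < P.v y) :
    P.v (x + y) = P.v x := by
  have hxy : x + y ≠ 0 := by
    intro hxy
    rw [eq_neg_of_add_eq_zero_right hxy, P.v_neg hx] at h
    exact h.false
  have h₁ := P.add_min x y hx hy hxy
  have h₂ := P.add_min (x + y) (-y) hxy (neg_ne_zero.2 hy) (by simpa using hx)
  rw [add_neg_cancel_right, P.v_neg hy] at h₂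
  omega

theorem v_add_of_ne {x y : M} (hx : x ≠ 0) (hy : y ≠ 0) (h : P.v x ≠ P.v y) :
    P.v (x + y) = min (P.v x) (P.v y) := by
  rcases h.lt_or_gt with h | h
  · rw [P.v_add_of_lt hx hy h, min_eq_left h.le]
  · rw [add_comm, P.v_add_of_lt hy hx h, min_eq_right h.le]

theorem v_multiset_prod {s : Multiset M} (hs : (0 : M) ∉ s) :
    P.v s.prod = (s.map P.v).sum := by
  induction s using Multiset.induction_on with
  | empty => simp [v_one]
  | cons a s ih =>
    rw [Multiset.mem_cons, not_or] at hs
    rw [Multiset.prod_cons, P.map_mul _ _ (Ne.symm hs.1) (Multiset.prod_ne_zero hs.2),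
      ih hs.2, Multiset.map_cons, Multiset.sum_cons]

theorem v_pow_add_le_one {p : ℕ} (hp : 1 < p) (z : M) {y : M} (hy₀ : y ≠ 0) (hy : P.v y = 1) :
    P.v (z ^ p + y) ≤ 1 := by
  rcases eq_or_ne z 0 with rfl | hz
  · rw [zero_pow (by omega), zero_add, hy]
  · have hne : P.v (z ^ p) ≠ P.v y := by
      rw [P.v_pow hz, hy]
      intro h
      have := Int.eq_one_of_mul_eq_one_right (Int.natCast_nonneg p) h
      omega
    rw [P.v_add_of_ne (pow_ne_zero p hz) hy₀ hne, hy]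
    exact min_le_right _ _

section Uniformizer

variable {t : M}

theorem v_sub_algebraMap_nonneg (ht : Transcendental F t) (hPt : P.v t = 0) (c : F) :
    0 ≤ P.v (t - algebraMap F M c) := by
  rcases eq_or_ne c 0 with rfl | hc
  · simp [hPt]
  · have hc' : algebraMap F M c ≠ 0 := (_root_.map_ne_zero _).2 hc
    have h := P.add_min t _ (by simpa using ht.sub_algebraMap_ne_zero 0) (neg_ne_zero.2 hc')
      (by simpa [← sub_eq_add_neg] using ht.sub_algebraMap_ne_zero c)
    rwa [P.v_neg hc', P.triv c hc, hPt, min_self, ← sub_eq_add_neg] at h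

/-- `(t - c) - (t - c')` is a nonzero constant, of valuation `0`. -/
theorem eq_of_v_sub_algebraMap_pos (ht : Transcendental F t) {c c' : F}
    (hc : 0 < P.v (t - algebraMap F M c)) (hc' : 0 < P.v (t - algebraMap F M c')) : c = c' := by
  by_contra hne
  have hdiff : t - algebraMap F M c + -(t - algebraMap F M c') = algebraMap F M (c' - c) := by
    rw [map_sub]
    ring
  have hc₀ := ht.sub_algebraMap_ne_zero c
  have hc₀' := ht.sub_algebraMap_ne_zero c'
  have hne' : c' - c ≠ 0 := sub_ne_zero.2 (Ne.symm hne)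
  have h := P.add_min _ _ hc₀ (neg_ne_zero.2 hc₀')
    (by rw [hdiff]; exact (_root_.map_ne_zero _).2 hne')
  rw [hdiff, P.v_neg hc₀', P.triv _ hne'] at h
  omega

theorem dvd_v_aeval [IsAlgClosed F] (ht : Transcendental F t) {n : ℤ}
    (hn : ∀ c : F, n ∣ P.v (t - algebraMap F M c)) {f : F[X]} (hf : f ≠ 0) :
    n ∣ P.v (aeval t f) := by
  have hroots :
      (f.roots.map fun c => t - algebraMap F M c) = f.roots.map (aeval t ∘ (X - C ·)) :=
    Multiset.map_congr rfl fun c _ => by simp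
  have h₀ : (0 : M) ∉ f.roots.map fun c => t - algebraMap F M c := by
    rw [Multiset.mem_map]
    rintro ⟨c, -, hc⟩
    exact ht.sub_algebraMap_ne_zero c hc
  rw [(IsAlgClosed.splits f).eq_prod_roots, _root_.map_mul, aeval_C, map_multiset_prod,
    Multiset.map_map, ← hroots,
    P.v_algebraMap_mul (leadingCoeff_ne_zero.2 hf) (Multiset.prod_ne_zero h₀),
    P.v_multiset_prod h₀, Multiset.map_map]
  exact Multiset.dvd_sum fun _ hm => by
    obtain ⟨c, -, rfl⟩ := Multiset.mem_map.1 hm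
    exact hn c

theorem dvd_v_of_mem_adjoin [IsAlgClosed F] (ht : Transcendental F t) {n : ℤ}
    (hn : ∀ c : F, n ∣ P.v (t - algebraMap F M c)) {r : M} (hr : r ∈ F⟮t⟯)
    (hr₀ : r ≠ 0) : n ∣ P.v r := by
  obtain ⟨f, g, rfl⟩ := (mem_adjoin_simple_iff F r).1 hr
  have hf : aeval t f ≠ 0 := fun h => hr₀ (by rw [h, zero_div])
  have hg : aeval t g ≠ 0 := fun h => hr₀ (by rw [h, div_zero])
  rw [P.v_div hf hg]
  exact dvd_sub (P.dvd_v_aeval ht hn fun h => hf (by simp [h]))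
    (P.dvd_v_aeval ht hn fun h => hg (by simp [h]))

/-- Valuations on `F(t)` are integer combinations of the `v (t - c)`, at most one of which is
nonzero; so that one is `1` when the prime is unramified. -/
theorem exists_v_sub_algebraMap_eq_one [IsAlgClosed F] (ht : Transcendental F t)
    (hPt : P.v t = 0) (hunr : P.UnramifiedOver t) : ∃ a : F, P.v (t - algebraMap F M a) = 1 := by
  obtain ⟨r, hr, hr₀, hr₁⟩ := hunr
  obtain ⟨a, ha⟩ : ∃ a : F, 0 < P.v (t - algebraMap F M a) := by
    by_contra! h
    have := P.dvd_v_of_mem_adjoin ht (n := 0)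
      (fun c => by rw [le_antisymm (h c) (P.v_sub_algebraMap_nonneg ht hPt c)]) hr hr₀
    rw [hr₁, zero_dvd_iff] at this
    exact one_ne_zero this
  refine ⟨a, Int.eq_one_of_dvd_one ha.le
    (hr₁ ▸ P.dvd_v_of_mem_adjoin ht (fun c => ?_) hr hr₀)⟩
  rcases (P.v_sub_algebraMap_nonneg ht hPt c).eq_or_lt with h₀ | hpos
  · rw [← h₀]
    exact dvd_zero _
  · rw [P.eq_of_v_sub_algebraMap_pos ht hpos ha]

end Uniformizer

section PrimeCharacteristic

variable [IsAlgClosed F] {p : ℕ} [CharP F p] {t : M}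

theorem v_pow_add_algebraMap_mul_le_one (hp : p.Prime) (ht : Transcendental F t) {a : F}
    (ha : P.v (t - algebraMap F M a) = 1) (x : M) {c : F} (hc : c ≠ 0) :
    P.v (x ^ p + algebraMap F M c * t) ≤ 1 := by
  have : Fact p.Prime := ⟨hp⟩
  have : CharP M p := charP_of_injective_algebraMap (algebraMap F M).injective p
  obtain ⟨e, he⟩ := IsAlgClosed.exists_pow_nat_eq (-(c * a)) hp.pos
  have hshift : x ^ p + algebraMap F M c * t =
      (x - algebraMap F M e) ^ p + algebraMap F M c * (t - algebraMap F M a) := by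
    rw [sub_pow_char, ← map_pow, he, map_neg, _root_.map_mul]
    ring
  have hta := ht.sub_algebraMap_ne_zero a
  rw [hshift]
  exact P.v_pow_add_le_one hp.one_lt _ (mul_ne_zero ((_root_.map_ne_zero _).2 hc) hta)
    (by rw [P.v_algebraMap_mul hc hta, ha])

theorem v_pow_add_algebraMap_mul_sub_mem (hp : p.Prime) (ht : Transcendental F t)
    (hnp : ¬∃ c : M, c ^ p = t) (hPt : P.v t = 0) {a : F} (ha : P.v (t - algebraMap F M a) = 1)
    (x : M) {c c' : F} (hc : c ≠ 0) (hc' : c' ≠ 0) :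
    P.v (x ^ p + algebraMap F M c * t) - P.v (x ^ p + algebraMap F M c' * t) ∈
      ({-1, 0, 1} : Set ℤ) := by
  have ht₀ : t ≠ 0 := by simpa using ht.sub_algebraMap_ne_zero 0
  have hct : ∀ {c : F}, c ≠ 0 →
      algebraMap F M c * t ≠ 0 ∧ P.v (algebraMap F M c * t) = 0 :=
    fun hc => ⟨mul_ne_zero ((_root_.map_ne_zero _).2 hc) ht₀,
      by rw [P.v_algebraMap_mul hc ht₀, hPt]⟩
  by_cases hx : x ≠ 0 ∧ P.v x < 0
  · have hpole : ∀ {c : F}, c ≠ 0 → P.v (x ^ p + algebraMap F M c * t) = P.v (x ^ p) :=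
      fun hc => P.v_add_of_lt (pow_ne_zero p hx.1) (hct hc).1 <| by
        rw [(hct hc).2, P.v_pow hx.1]
        exact mul_neg_of_pos_of_neg (by exact_mod_cast hp.pos) hx.2
    simp [hpole hc, hpole hc']
  · have hbound : ∀ {c : F}, c ≠ 0 → 0 ≤ P.v (x ^ p + algebraMap F M c * t) ∧
        P.v (x ^ p + algebraMap F M c * t) ≤ 1 := by
      intro c hc
      refine ⟨?_, P.v_pow_add_algebraMap_mul_le_one hp ht ha x hc⟩
      rcases eq_or_ne x 0 with rfl | hx₀
      · rw [zero_pow hp.ne_zero, zero_add, (hct hc).2]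
      · have h := P.add_min _ _ (pow_ne_zero p hx₀) (hct hc).1
          (pow_add_algebraMap_mul_ne_zero hp.pos hnp x hc)
        have hxp : 0 ≤ P.v (x ^ p) := by
          rw [P.v_pow hx₀]
          exact mul_nonneg (Int.natCast_nonneg p) (not_lt.1 fun h => hx ⟨hx₀, h⟩)
        rw [(hct hc).2] at h
        omega
    obtain ⟨h₁, h₂⟩ := hbound hc
    obtain ⟨h₃, h₄⟩ := hbound hc'
    simp only [Set.mem_insert_iff, Set.mem_singleton_iff]
    omega

/-- `(x ^ p + α t) / (x ^ p + β t) + b = (1 + b) (x ^ p + c t) / (x ^ p + β t)` with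
`c = (α + b β) / (1 + b)`. -/
theorem v_div_add_algebraMap_mem (hp : p.Prime) (ht : Transcendental F t)
    (hnp : ¬∃ c : M, c ^ p = t) (hPt : P.v t = 0) {a : F} (ha : P.v (t - algebraMap F M a) = 1)
    (x : M) {α β b : F} (hβ : β ≠ 0) (hb : 1 + b ≠ 0) (hαβ : α + b * β ≠ 0) :
    P.v ((x ^ p + algebraMap F M α * t) / (x ^ p + algebraMap F M β * t) + algebraMap F M b) ∈
      ({-1, 0, 1} : Set ℤ) := by
  set c := (α + b * β) / (1 + b)
  have hc : c ≠ 0 := div_ne_zero hαβ hb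
  have hden := pow_add_algebraMap_mul_ne_zero hp.pos hnp x hβ
  have hnum := pow_add_algebraMap_mul_ne_zero hp.pos hnp x hc
  have hb' : algebraMap F M (1 + b) ≠ 0 := (_root_.map_ne_zero _).2 hb
  have hid : (x ^ p + algebraMap F M α * t) / (x ^ p + algebraMap F M β * t) + algebraMap F M b =
      algebraMap F M (1 + b) * (x ^ p + algebraMap F M c * t) /
        (x ^ p + algebraMap F M β * t) := by
    rw [div_add' _ _ _ hden]
    congr 1
    simp only [c, map_div₀, map_add, _root_.map_mul, map_one] at hb' ⊢
    field_simp
    ring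
  rw [hid, P.v_div (mul_ne_zero hb' hnum) hden, P.v_algebraMap_mul hb hnum]
  exact P.v_pow_add_algebraMap_mul_sub_mem hp ht hnp hPt ha x hc hβ

end PrimeCharacteristic

end FFPrime

theorem stmt_12_general {F M : Type*} [Field F] [Field M] [Algebra F M] [IsAlgClosed F]
    (p : ℕ) (hp : p.Prime) [CharP F p]
    (t : M) (htrans : Transcendental F t)
    (hnp : ¬∃ c : M, c ^ p = t)
    (x : M) (b : F) (hb1 : b ≠ 1) (hb2 : b ≠ -1)
    (P : FFPrime F M) (hunr : P.UnramifiedOver t) (hPt : P.v t = 0) :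
    P.v ((x ^ p + t) / (x ^ p - t) + algebraMap F M b) ∈ ({-1, 0, 1} : Set ℤ) ∧
    P.v (((x ^ p + t) / (x ^ p - t))⁻¹ + algebraMap F M b) ∈ ({-1, 0, 1} : Set ℤ) := by
  obtain ⟨a, ha⟩ := P.exists_v_sub_algebraMap_eq_one htrans hPt hunr
  have hb : 1 + b ≠ 0 := fun h => hb2 (by linear_combination h)
  have key := fun {α β : F} (hβ : β ≠ 0) (hαβ : α + b * β ≠ 0) =>
    P.v_div_add_algebraMap_mem hp htrans hnp hPt ha x hβ hb hαβ
  have hu : (x ^ p + t) / (x ^ p - t) =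
      (x ^ p + algebraMap F M 1 * t) / (x ^ p + algebraMap F M (-1) * t) := by
    simp [sub_eq_add_neg]
  rw [hu, inv_div]
  exact ⟨key (neg_ne_zero.2 one_ne_zero) (fun h => hb1 (by linear_combination -h)),
    key one_ne_zero (fun h => hb1 (by linear_combination h))⟩

/-- Let `F` be an algebraically closed field of characteristic `p > 2`, `M` a function
field over `F`, and `t ∈ M` transcendental over `F` and not a `p`-th power in `M`. For
`x ∈ M`, set `u = (x^p + t)/(x^p - t)`, and let `b ∈ F`, `b ≠ ±1`. Then every prime of
`M` unramified over `F(t)` that is neither a zero nor a pole of `t` has order in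
`{-1, 0, 1}` at `u + b` and at `u⁻¹ + b`. -/
theorem stmt_12 {F M : Type*} [Field F] [Field M] [Algebra F M] [IsAlgClosed F]
    (p : ℕ) (hp : p.Prime) (hp2 : 2 < p) [CharP F p]
    (t : M) (htrans : Transcendental F t)
    (hfin : FiniteDimensional (IntermediateField.adjoin F {t}) M)
    (hnp : ¬∃ c : M, c ^ p = t)
    (x : M) (b : F) (hb1 : b ≠ 1) (hb2 : b ≠ -1)
    (P : FFPrime F M) (hunr : P.UnramifiedOver t) (hPt : P.v t = 0) :
    P.v ((x ^ p + t) / (x ^ p - t) + algebraMap F M b) ∈ ({-1, 0, 1} : Set ℤ) ∧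
    P.v (((x ^ p + t) / (x ^ p - t))⁻¹ + algebraMap F M b) ∈ ({-1, 0, 1} : Set ℤ) :=
  stmt_12_general p hp t htrans hnp x b hb1 hb2 P hunr hPt
end

section
/- Let F be an algebraically closed field of characteristic p > 2, let M be a function field over F, and let t ∈ M be transcendental over F, not a p-th power in M (so M/F(t) is separable), and such that all zeros and poles of t are simple. Then for all x, y ∈ M the following are equivalent. (a) There exist natural numbers s, i, j, i₁, j₁ and elements u, ũ, v, ṽ, u₁, ũ₁, v₁, ṽ₁ ∈ M such that the elements x^p − t, x^p − t^{−1}, y^p − t^{p^s}, y^p − t^{−p^s}, (x+1)^p − t, (x+1)^p − t^{−1}, (y+1)^p − t^{p^s}, (y+1)^p − t^{−p^s} are all nonzero and u = (x^p + t)/(x^p − t), ũ = (x^p + t^{−1})/(x^p − t^{−1}), v = (y^p + t^{p^s})/(y^p − t^{p^s}), ṽ = (y^p + t^{−p^s})/(y^p − t^{−p^s}), v = u^{p^i}, ṽ = ũ^{p^j}, and likewise u₁ = ((x+1)^p + t)/((x+1)^p − t), ũ₁ = ((x+1)^p + t^{−1})/((x+1)^p − t^{−1}), v₁ = ((y+1)^p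 + t^{p^s})/((y+1)^p − t^{p^s}), ṽ₁ = ((y+1)^p + t^{−p^s})/((y+1)^p − t^{−p^s}), v₁ = u₁^{p^{i₁}}, ṽ₁ = ũ₁^{p^{j₁}}. (b) There exists a natural number s with y = x^{p^s}. -/
theorem Nat.pow_add_pow_eq_two_mul_pow_iff {p i j s : ℕ} (hp : 1 < p) :
    p ^ i + p ^ j = 2 * p ^ s ↔ i = s ∧ j = s := by
  refine ⟨fun h => ?_, by rintro ⟨rfl, rfl⟩; ring⟩
  have hne : ∀ {a b : ℕ}, a < b → p ^ a + p ^ b ≠ 2 * p ^ s := by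
    intro a b hab
    rcases le_or_gt b s with hbs | hsb
    · have := Nat.pow_lt_pow_right hp hab
      have := pow_le_pow_right₀ hp.le hbs
      omega
    · have h₁ : p ^ (s + 1) ≤ p ^ b := pow_le_pow_right₀ hp.le hsb
      have h₂ : 2 * p ^ s ≤ p ^ (s + 1) := by
        rw [pow_succ, mul_comm]
        exact Nat.mul_le_mul_left _ hp
      have h₃ : 0 < p ^ a := Nat.pow_pos (by omega)
      omega
  have hij : i = j := by
    rcases lt_trichotomy i j with hij | hij | hij
    · exact absurd h (hne hij)
    · exact hij
    · exact absurd (by omega) (hne hij)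
  subst hij
  have hi : i = s := Nat.pow_right_injective hp (show p ^ i = p ^ s by omega)
  exact ⟨hi, hi⟩

section Cayley

variable {K : Type*} [Field K]

def cayley (c w : K) : K := (w + c) / (w - c)

theorem cayley_pow_expChar_pow (p : ℕ) [ExpChar K p] (c w : K) (n : ℕ) :
    cayley c w ^ p ^ n = cayley (c ^ p ^ n) (w ^ p ^ n) := by
  rw [cayley, cayley, div_pow, add_pow_expChar_pow, sub_pow_expChar_pow]

theorem mul_eq_mul_of_cayley_eq (h2 : (2 : K) ≠ 0) {c d w z : K} (hw : w - c ≠ 0)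
    (hz : z - d ≠ 0) (h : cayley c w = cayley d z) : c * z = w * d := by
  rw [cayley, cayley, div_eq_div_iff hw hz] at h
  exact mul_left_cancel₀ h2 (by linear_combination h)

/-- The equation `v = u ^ p ^ i` of the system for `c = t`, and `ṽ = ũ ^ p ^ j` for
`c = t⁻¹`, together with the nonvanishing of its denominators. -/
def CayleyRel (p : ℕ) (c x y : K) (s i : ℕ) : Prop :=
  x ^ p - c ≠ 0 ∧ y ^ p - c ^ p ^ s ≠ 0 ∧
    cayley (c ^ p ^ s) (y ^ p) = cayley c (x ^ p) ^ p ^ i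

variable {p : ℕ} [ExpChar K p]

theorem CayleyRel.mul_eq (h2 : (2 : K) ≠ 0) {c x y : K} {s i : ℕ}
    (h : CayleyRel p c x y s i) : c ^ p ^ s * (x ^ p) ^ p ^ i = y ^ p * c ^ p ^ i := by
  obtain ⟨hx, hy, h⟩ := h
  rw [cayley_pow_expChar_pow] at h
  refine mul_eq_mul_of_cayley_eq h2 hy ?_ h
  rw [← sub_pow_expChar_pow]
  exact pow_ne_zero _ hx

theorem cayleyRel_pow_expChar_pow {c x : K} (hx : x ^ p - c ≠ 0) (s : ℕ) :
    CayleyRel p c x (x ^ p ^ s) s s := by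
  have hpow : (x ^ p ^ s) ^ p = (x ^ p) ^ p ^ s := by rw [← pow_mul, ← pow_mul, mul_comm]
  refine ⟨hx, ?_, ?_⟩
  · rw [hpow, ← sub_pow_expChar_pow]
    exact pow_ne_zero _ hx
  · rw [hpow, cayley_pow_expChar_pow]

theorem CayleyRel.eq_pow_or_exists_zpow_eq (hp : 1 < p) (h2 : (2 : K) ≠ 0) {t x y : K}
    (ht : t ≠ 0) {s i j : ℕ} (h : CayleyRel p t x y s i) (h' : CayleyRel p t⁻¹ x y s j) :
    y = x ^ p ^ s ∨ ∃ m n : ℤ, n ≠ 0 ∧ x ^ m = t ^ n := by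
  have hrel := h.mul_eq h2
  have hrel' : (x ^ p) ^ p ^ j * t ^ p ^ j = y ^ p * t ^ p ^ s := by
    have hinv := h'.mul_eq h2
    rw [inv_pow, inv_pow] at hinv
    field_simp at hinv
    linear_combination hinv
  have hfrob : y ^ p = (x ^ p ^ s) ^ p → y = x ^ p ^ s := fun hyx =>
    frobenius_inj K p (by simpa only [frobenius_def] using hyx)
  have hp0 : p ≠ 0 := by omega
  by_cases hx : x = 0
  · left
    apply hfrob
    subst hx
    rw [zero_pow hp0, zero_pow (pow_ne_zero _ hp0), mul_zero, zero_eq_mul] at hrel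
    rw [hrel.resolve_right (pow_ne_zero _ ht), zero_pow (pow_ne_zero _ hp0), zero_pow hp0]
  have helim : t ^ (2 * p ^ s) * (x ^ p) ^ p ^ i = (x ^ p) ^ p ^ j * t ^ (p ^ i + p ^ j) := by
    rw [two_mul, pow_add, pow_add]
    linear_combination t ^ p ^ s * hrel - t ^ p ^ i * hrel'
  by_cases hexp : p ^ i + p ^ j = 2 * p ^ s
  · obtain ⟨rfl, rfl⟩ := (Nat.pow_add_pow_eq_two_mul_pow_iff hp).mp hexp
    left
    apply hfrob
    rw [← pow_mul, mul_comm, pow_mul]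
    exact (mul_left_cancel₀ (pow_ne_zero _ ht) (hrel.trans (mul_comm _ _))).symm
  · right
    refine ⟨p * ((p ^ i : ℕ) - (p ^ j : ℕ) : ℤ),
      ((p ^ i + p ^ j : ℕ) : ℤ) - ((2 * p ^ s : ℕ) : ℤ),
      sub_ne_zero.mpr (by exact_mod_cast hexp), ?_⟩
    rw [zpow_mul, zpow_natCast, zpow_sub₀ (pow_ne_zero _ hx), zpow_sub₀ ht, zpow_natCast,
      zpow_natCast, zpow_natCast, zpow_natCast, div_eq_div_iff (pow_ne_zero _ (pow_ne_zero _ hx))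
      (pow_ne_zero _ ht)]
    linear_combination helim

end Cayley

section Algebraic

variable {F K : Type*} [Field F] [Field K] [Algebra F K]

theorem IsAlgebraic.zpow {x : K} (hx : IsAlgebraic F x) (m : ℤ) : IsAlgebraic F (x ^ m) :=
  mem_algebraicClosure_iff.mp (zpow_mem (mem_algebraicClosure_iff.mpr hx) m)

theorem IsAlgebraic.of_zpow {x : K} {n : ℤ} (hn : n ≠ 0) (hx : IsAlgebraic F (x ^ n)) :
    IsAlgebraic F x := by
  obtain ⟨k, rfl | rfl⟩ := Int.eq_nat_or_neg n
  · rw [zpow_natCast] at hx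
    exact hx.of_pow (by omega)
  · rw [zpow_neg, zpow_natCast, IsAlgebraic.inv_iff] at hx
    exact hx.of_pow (by omega)

open Polynomial in
theorem isAlgebraic_of_pow_mul_pow_add_one_eq {x : K} {m a b : ℕ} (hm : m ≠ 0)
    (h : x ^ m * (x + 1) ^ a = (x + 1) ^ b) : IsAlgebraic F x :=
  ⟨X ^ m * (X + 1) ^ a - (X + 1) ^ b, fun h0 => by simpa [hm] using congrArg (eval 0) h0,
    by simp [h]⟩

theorem isAlgebraic_of_zpow_eq_add_one_zpow {x : K} {m n : ℤ} (hm : m ≠ 0)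
    (h : x ^ m = (x + 1) ^ n) : IsAlgebraic F x := by
  wlog hm' : 0 < m generalizing m n
  · exact this (neg_ne_zero.mpr hm) (by rw [zpow_neg, zpow_neg, h]) (by omega)
  by_cases hx : x + 1 = 0
  · rw [eq_neg_of_add_eq_zero_left hx]
    simpa using isAlgebraic_algebraMap (R := F) (A := K) (-1)
  lift m to ℕ using hm'.le
  rw [zpow_natCast] at h
  obtain ⟨k, rfl | rfl⟩ := Int.eq_nat_or_neg n
  · rw [zpow_natCast] at h
    exact isAlgebraic_of_pow_mul_pow_add_one_eq (m := m) (a := 0) (b := k) (by omega)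
      (by rw [h, pow_zero, mul_one])
  · refine isAlgebraic_of_pow_mul_pow_add_one_eq (m := m) (a := k) (b := 0) (by omega) ?_
    rw [h, zpow_neg, zpow_natCast, pow_zero, inv_mul_cancel₀ (pow_ne_zero _ hx)]

theorem Transcendental.zpow_ne_of_add_one_zpow_eq {t x : K} (ht : Transcendental F t)
    {m n m₁ n₁ : ℤ} (hn : n ≠ 0) (hn₁ : n₁ ≠ 0) (h₁ : (x + 1) ^ m₁ = t ^ n₁) :
    x ^ m ≠ t ^ n := by
  intro h
  have hxm : IsAlgebraic F (x ^ m) := by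
    rcases eq_or_ne m 0 with rfl | hm
    · rw [zpow_zero]
      exact isAlgebraic_one
    refine IsAlgebraic.zpow (isAlgebraic_of_zpow_eq_add_one_zpow (m := m * n₁) (n := m₁ * n)
      (mul_ne_zero hm hn₁) ?_) m
    rw [zpow_mul, h, zpow_mul, h₁, ← zpow_mul, ← zpow_mul, mul_comm]
  exact ht ((h ▸ hxm).of_zpow hn)

end Algebraic

theorem stmt_16_general {F M : Type*} [Field F] [Field M] [Algebra F M]
    (p : ℕ) (hp : p.Prime) (hp2 : 2 < p) [CharP F p]
    (t : M) (htrans : Transcendental F t)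
    (hnp : ¬∃ c : M, c ^ p = t)
    (x y : M) :
    (∃ (s i j i₁ j₁ : ℕ) (u ut v vt u₁ ut₁ v₁ vt₁ : M),
      x ^ p - t ≠ 0 ∧ x ^ p - t⁻¹ ≠ 0 ∧
      y ^ p - t ^ p ^ s ≠ 0 ∧ y ^ p - t⁻¹ ^ p ^ s ≠ 0 ∧
      (x + 1) ^ p - t ≠ 0 ∧ (x + 1) ^ p - t⁻¹ ≠ 0 ∧
      (y + 1) ^ p - t ^ p ^ s ≠ 0 ∧ (y + 1) ^ p - t⁻¹ ^ p ^ s ≠ 0 ∧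
      u = (x ^ p + t) / (x ^ p - t) ∧
      ut = (x ^ p + t⁻¹) / (x ^ p - t⁻¹) ∧
      v = (y ^ p + t ^ p ^ s) / (y ^ p - t ^ p ^ s) ∧
      vt = (y ^ p + t⁻¹ ^ p ^ s) / (y ^ p - t⁻¹ ^ p ^ s) ∧
      v = u ^ p ^ i ∧ vt = ut ^ p ^ j ∧
      u₁ = ((x + 1) ^ p + t) / ((x + 1) ^ p - t) ∧
      ut₁ = ((x + 1) ^ p + t⁻¹) / ((x + 1) ^ p - t⁻¹) ∧
      v₁ = ((y + 1) ^ p + t ^ p ^ s) / ((y + 1) ^ p - t ^ p ^ s) ∧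
      vt₁ = ((y + 1) ^ p + t⁻¹ ^ p ^ s) / ((y + 1) ^ p - t⁻¹ ^ p ^ s) ∧
      v₁ = u₁ ^ p ^ i₁ ∧ vt₁ = ut₁ ^ p ^ j₁)
    ↔ (∃ s : ℕ, y = x ^ p ^ s) := by
  have : Fact p.Prime := ⟨hp⟩
  have : CharP M p := charP_of_injective_algebraMap (algebraMap F M).injective p
  have h2 : (2 : M) ≠ 0 := Ring.two_ne_zero (by rw [ringChar.eq M p]; omega)
  have ht : t ≠ 0 := fun h0 => htrans (h0 ▸ isAlgebraic_zero)
  constructor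
  · rintro ⟨s, i, j, i₁, j₁, _, _, _, _, _, _, _, _, hx, hxi, hy, hyi, hx₁, hxi₁, hy₁, hyi₁,
      rfl, rfl, rfl, rfl, hv, hvt, rfl, rfl, rfl, rfl, hv₁, hvt₁⟩
    refine ⟨s, ?_⟩
    obtain hxy | ⟨m, n, hn, hxt⟩ :=
      CayleyRel.eq_pow_or_exists_zpow_eq hp.one_lt h2 ht ⟨hx, hy, hv⟩ ⟨hxi, hyi, hvt⟩
    · exact hxy
    obtain hxy₁ | ⟨m₁, n₁, hn₁, hxt₁⟩ :=
      CayleyRel.eq_pow_or_exists_zpow_eq hp.one_lt h2 ht ⟨hx₁, hy₁, hv₁⟩ ⟨hxi₁, hyi₁, hvt₁⟩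
    · rw [add_pow_expChar_pow, one_pow] at hxy₁
      exact add_right_cancel hxy₁
    · exact absurd hxt (htrans.zpow_ne_of_add_one_zpow_eq hn hn₁ hxt₁)
  · rintro ⟨s, rfl⟩
    have hroot : ∀ w : M, w ^ p - t ≠ 0 ∧ w ^ p - t⁻¹ ≠ 0 := fun w =>
      ⟨sub_ne_zero.mpr fun h => hnp ⟨w, h⟩,
        sub_ne_zero.mpr fun h => hnp ⟨w⁻¹, by rw [inv_pow, h, inv_inv]⟩⟩
    obtain ⟨hx, hy, hv⟩ := cayleyRel_pow_expChar_pow (hroot x).1 s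
    obtain ⟨hxi, hyi, hvt⟩ := cayleyRel_pow_expChar_pow (hroot x).2 s
    obtain ⟨hx₁, hy₁, hv₁⟩ := cayleyRel_pow_expChar_pow (hroot (x + 1)).1 s
    obtain ⟨hxi₁, hyi₁, hvt₁⟩ := cayleyRel_pow_expChar_pow (hroot (x + 1)).2 s
    have hx1 : x ^ p ^ s + 1 = (x + 1) ^ p ^ s := by rw [add_pow_expChar_pow, one_pow]
    rw [hx1]
    exact ⟨s, s, s, s, s, _, _, _, _, _, _, _, _, hx, hxi, hy, hyi, hx₁, hxi₁, hy₁, hyi₁,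
      rfl, rfl, rfl, rfl, hv, hvt, rfl, rfl, rfl, rfl, hv₁, hvt₁⟩

/-- Let `F` be algebraically closed of characteristic `p > 2`, `M` a function field
over `F`, and `t ∈ M` transcendental over `F`, not a `p`-th power in `M`, with all
zeros and poles of `t` simple. Then for `x, y ∈ M`, the system of equations `E` for
`(x, y)` and `(x + 1, y + 1)` is solvable in `M` if and only if `y = x^{p^s}` for some
natural number `s`. -/
theorem stmt_16 {F M : Type*} [Field F] [Field M] [Algebra F M] [IsAlgClosed F]
    (p : ℕ) (hp : p.Prime) (hp2 : 2 < p) [CharP F p]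
    (t : M) (htrans : Transcendental F t)
    (hfin : FiniteDimensional (IntermediateField.adjoin F {t}) M)
    (hnp : ¬∃ c : M, c ^ p = t)
    (hsimple : ∀ P : FFPrime F M, P.v t ∈ ({-1, 0, 1} : Set ℤ))
    (x y : M) :
    (∃ (s i j i₁ j₁ : ℕ) (u ut v vt u₁ ut₁ v₁ vt₁ : M),
      x ^ p - t ≠ 0 ∧ x ^ p - t⁻¹ ≠ 0 ∧
      y ^ p - t ^ p ^ s ≠ 0 ∧ y ^ p - t⁻¹ ^ p ^ s ≠ 0 ∧
      (x + 1) ^ p - t ≠ 0 ∧ (x + 1) ^ p - t⁻¹ ≠ 0 ∧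
      (y + 1) ^ p - t ^ p ^ s ≠ 0 ∧ (y + 1) ^ p - t⁻¹ ^ p ^ s ≠ 0 ∧
      u = (x ^ p + t) / (x ^ p - t) ∧
      ut = (x ^ p + t⁻¹) / (x ^ p - t⁻¹) ∧
      v = (y ^ p + t ^ p ^ s) / (y ^ p - t ^ p ^ s) ∧
      vt = (y ^ p + t⁻¹ ^ p ^ s) / (y ^ p - t⁻¹ ^ p ^ s) ∧
      v = u ^ p ^ i ∧ vt = ut ^ p ^ j ∧
      u₁ = ((x + 1) ^ p + t) / ((x + 1) ^ p - t) ∧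
      ut₁ = ((x + 1) ^ p + t⁻¹) / ((x + 1) ^ p - t⁻¹) ∧
      v₁ = ((y + 1) ^ p + t ^ p ^ s) / ((y + 1) ^ p - t ^ p ^ s) ∧
      vt₁ = ((y + 1) ^ p + t⁻¹ ^ p ^ s) / ((y + 1) ^ p - t⁻¹ ^ p ^ s) ∧
      v₁ = u₁ ^ p ^ i₁ ∧ vt₁ = ut₁ ^ p ^ j₁)
    ↔ (∃ s : ℕ, y = x ^ p ^ s) :=
  stmt_16_general p hp hp2 t htrans hnp x y
end

section
/- Let M be a field of characteristic 2 and let t ∈ M be a nonzero element that is not a square in M. Let x, ỹ ∈ M, set y = ỹ², and let j, r, s be natural numbers with j ≥ 1, r ≥ 1, s ≥ 1. Set u = (x² + t² + t)/(x² + t) and ũ = (x² + t^{−2} + t^{−1})/(x² + t^{−1}) (the denominators are nonzero since t is not a square). Then the following are equivalent: (a) y² + t^{2^s} ≠ 0, y² + t^{−2^s} ≠ 0, and there exist v, ṽ ∈ M with v = u^{2^r}, ṽ = ũ^{2^j}, v = (y² + t^{2^{s+1}} + t^{2^s})/(y² + t^{2^s}), and ṽ = (y² + t^{−2^{s+1}}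 + t^{−2^s})/(y² + t^{−2^s}); (b) ỹ² + t^{2^{s−1}} ≠ 0, ỹ² + t^{−2^{s−1}} ≠ 0, and there exist v₁, ṽ₁ ∈ M with v₁ = u^{2^{r−1}}, ṽ₁ = ũ^{2^{j−1}}, v₁ = (ỹ² + t^{2^s} + t^{2^{s−1}})/(ỹ² + t^{2^{s−1}}), and ṽ₁ = (ỹ² + t^{−2^s} + t^{−2^{s−1}})/(ỹ² + t^{−2^{s−1}}). -/
/-- Let `M` be a field of characteristic `2` and `t ∈ M` a nonzero element that is not
a square. Let `x, ỹ ∈ M`, `y = ỹ²`, and `j, r, s ≥ 1`. With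
`u = (x² + t² + t)/(x² + t)` and `ũ = (x² + t⁻² + t⁻¹)/(x² + t⁻¹)`, the system
`E2(u, ũ, v, ṽ, x, y, j, r, s)` is solvable in `v, ṽ` if and only if the system
`E2(u, ũ, v₁, ṽ₁, x, ỹ, j-1, r-1, s-1)` is solvable in `v₁, ṽ₁`. -/
theorem stmt_17 {M : Type*} [Field M] [CharP M 2]
    (t : M) (ht0 : t ≠ 0) (hsq : ¬∃ c : M, c ^ 2 = t)
    (x yt y : M) (hy : y = yt ^ 2)
    (j r s : ℕ) (hj : 1 ≤ j) (hr : 1 ≤ r) (hs : 1 ≤ s) :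
    (y ^ 2 + t ^ 2 ^ s ≠ 0 ∧ y ^ 2 + t⁻¹ ^ 2 ^ s ≠ 0 ∧
      ∃ v vt : M,
        v = ((x ^ 2 + t ^ 2 + t) / (x ^ 2 + t)) ^ 2 ^ r ∧
        vt = ((x ^ 2 + t⁻¹ ^ 2 + t⁻¹) / (x ^ 2 + t⁻¹)) ^ 2 ^ j ∧
        v = (y ^ 2 + t ^ 2 ^ (s + 1) + t ^ 2 ^ s) / (y ^ 2 + t ^ 2 ^ s) ∧
        vt = (y ^ 2 + t⁻¹ ^ 2 ^ (s + 1) + t⁻¹ ^ 2 ^ s) / (y ^ 2 + t⁻¹ ^ 2 ^ s)) ↔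
    (yt ^ 2 + t ^ 2 ^ (s - 1) ≠ 0 ∧ yt ^ 2 + t⁻¹ ^ 2 ^ (s - 1) ≠ 0 ∧
      ∃ v₁ vt₁ : M,
        v₁ = ((x ^ 2 + t ^ 2 + t) / (x ^ 2 + t)) ^ 2 ^ (r - 1) ∧
        vt₁ = ((x ^ 2 + t⁻¹ ^ 2 + t⁻¹) / (x ^ 2 + t⁻¹)) ^ 2 ^ (j - 1) ∧
        v₁ = (yt ^ 2 + t ^ 2 ^ s + t ^ 2 ^ (s - 1)) / (yt ^ 2 + t ^ 2 ^ (s - 1)) ∧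
        vt₁ = (yt ^ 2 + t⁻¹ ^ 2 ^ s + t⁻¹ ^ 2 ^ (s - 1)) / (yt ^ 2 + t⁻¹ ^ 2 ^ (s - 1))) := by
  obtain ⟨m, rfl⟩ : ∃ m, s = m + 1 := ⟨s - 1, (Nat.succ_pred_eq_of_pos hs).symm⟩
  obtain ⟨r', rfl⟩ : ∃ r', r = r' + 1 := ⟨r - 1, (Nat.succ_pred_eq_of_pos hr).symm⟩
  obtain ⟨j', rfl⟩ : ∃ j', j = j' + 1 := ⟨j - 1, (Nat.succ_pred_eq_of_pos hj).symm⟩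
  subst hy
  -- squaring is injective in char 2
  have sqi : ∀ a b : M, a ^ 2 = b ^ 2 ↔ a = b := by
    intro a b
    constructor
    · intro h
      have h2 : (a - b) ^ 2 = 0 := by
        rw [CharTwo.sub_eq_add, CharTwo.add_sq, h, ← CharTwo.sub_eq_add, sub_self]
      exact sub_eq_zero.mp ((pow_eq_zero_iff (two_ne_zero)).mp h2)
    · rintro rfl; rfl
  have hsq2 : ∀ a b : M, a ^ 2 + b ^ 2 ^ (m + 1) = (a + b ^ 2 ^ m) ^ 2 := by
    intro a b
    rw [CharTwo.add_sq, ← pow_mul, ← pow_succ]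
  have hsq3 : ∀ a b : M,
      a ^ 2 + b ^ 2 ^ (m + 2) + b ^ 2 ^ (m + 1)
        = (a + b ^ 2 ^ (m + 1) + b ^ 2 ^ m) ^ 2 := by
    intro a b
    rw [CharTwo.add_sq, CharTwo.add_sq, ← pow_mul, ← pow_mul, ← pow_succ, ← pow_succ]
  have hpow : ∀ (a : M) (n : ℕ), a ^ 2 ^ (n + 1) = (a ^ 2 ^ n) ^ 2 := by
    intro a n
    rw [← pow_mul, ← pow_succ]
  simp only [Nat.add_sub_cancel, show m + 1 + 1 = m + 2 from rfl] at *
  rw [hsq2 (yt ^ 2) t, hsq2 (yt ^ 2) t⁻¹, hsq3 (yt ^ 2) t, hsq3 (yt ^ 2) t⁻¹,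
    ← div_pow, ← div_pow, hpow _ r', hpow _ j',
    pow_ne_zero_iff (two_ne_zero), pow_ne_zero_iff (two_ne_zero)]
  constructor
  · rintro ⟨h1, h2, v, vt, rfl, rfl, h3, h4⟩
    exact ⟨h1, h2, _, _, rfl, rfl, (sqi _ _).mp h3, (sqi _ _).mp h4⟩
  · rintro ⟨h1, h2, v, vt, rfl, rfl, h3, h4⟩
    exact ⟨h1, h2, _, _, rfl, rfl, (sqi _ _).mpr h3, (sqi _ _).mpr h4⟩
end

section
/- Let F be an algebraically closed field of characteristic 2, let M be a function field over F, and let t ∈ M be transcendental over F, not a square in M (so M/F(t) is separable), and such that all zeros and poles of t are simple. Then for all x, y ∈ M and every natural number s, the following are equivalent. (a) There exist natural numbers j, r and elements u, ũ, v, ṽ ∈ M such that x² + t, x² + t^{−1}, y² + t^{2^s}, y² + t^{−2^s} are all nonzero and u = (x² + t² + t)/(x² + t), ũ = (x² + t^{−2} + t^{−1})/(x² + t^{−1}), v = (y² + t^{2^{s+1}} + t^{2^s})/(y² + t^{2^s}), ṽ = (y² + t^{−2^{s+1}} + t^{−2^s})/(y² + t^{−2^s}), v = u^{2^r}, and ṽ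 = ũ^{2^j}. (b) y = x^{2^s}. -/
/-!
In characteristic two the squares form a subfield `K`, and `t ∉ K` forces `t ^ n ∈ K` exactly
for even `n`. Clearing denominators, `v = u ^ 2 ^ r` reads
`(y + t ^ (2 ^ s - 2 ^ r) * x ^ 2 ^ r) ^ 2 = t ^ (2 ^ (s + 1) - 2 ^ r) + t ^ 2 ^ s`.
For `r = s` the right side vanishes and `y = x ^ 2 ^ s`. Otherwise the right side must lie in `K`,
which forces `r, s ≥ 1` and determines `y + t ^ (2 ^ s - 2 ^ r) * x ^ 2 ^ r`; the same with `t⁻¹`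
in place of `t`, subtracted from it, eliminates `y`. Taking square roots lowers all exponent
indices of the resulting identity by one until one of them is `0`; then its left side is still
a square, while its right side contains an odd power of `t` and so is not in `K`.
-/

theorem notMem_of_sub_mem {G S : Type*} [AddCommGroup G] [SetLike S G] [AddSubgroupClass S G]
    {K : S} {a b : G} (hb : b ∉ K) (h : a - b ∈ K) : a ∉ K :=
  fun ha => hb (sub_sub_cancel a b ▸ sub_mem ha h)

section CharTwo

variable {M : Type*} [Field M]

def shiftTerm (T x : M) (s r : ℕ) : M := T ^ ((2 : ℤ) ^ s - 2 ^ r) * x ^ 2 ^ r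

def shiftSum (T : M) (s r : ℕ) : M := T ^ ((2 : ℤ) ^ (s + 1) - 2 ^ r) + T ^ (2 : ℤ) ^ s

theorem shiftTerm_succ (T x : M) (s r : ℕ) :
    shiftTerm T x (s + 1) (r + 1) = shiftTerm T x s r ^ 2 := by
  rw [shiftTerm, shiftTerm, mul_pow, ← zpow_ofNat, ← zpow_mul, ← pow_mul]
  ring_nf

variable [CharP M 2]

theorem shiftSum_succ (T : M) (s r : ℕ) : shiftSum T (s + 1) (r + 1) = shiftSum T s r ^ 2 := by
  rw [shiftSum, shiftSum, CharTwo.add_sq, ← zpow_ofNat, ← zpow_ofNat, ← zpow_mul, ← zpow_mul]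
  ring_nf

theorem shiftSum_self (T : M) (s : ℕ) : shiftSum T s s = 0 := by
  rw [shiftSum, show (2 : ℤ) ^ (s + 1) - 2 ^ s = 2 ^ s by ring, CharTwo.add_self_eq_zero]

variable (M) in
def squareSubfield : Subfield M := (frobenius M 2).fieldRange

theorem mem_squareSubfield {a : M} : a ∈ squareSubfield M ↔ ∃ b, b ^ 2 = a := by
  simp [squareSubfield, RingHom.mem_fieldRange, frobenius_def]

theorem sq_mem_squareSubfield (b : M) : b ^ 2 ∈ squareSubfield M :=
  mem_squareSubfield.2 ⟨b, rfl⟩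

theorem ne_zero_of_notMem_squareSubfield {T : M} (hT : T ∉ squareSubfield M) : T ≠ 0 :=
  fun h => hT (h ▸ zero_mem _)

theorem inv_notMem_squareSubfield {T : M} (hT : T ∉ squareSubfield M) :
    T⁻¹ ∉ squareSubfield M :=
  fun h => hT (by simpa using inv_mem h)

theorem sq_add_ne_zero {T : M} (hT : T ∉ squareSubfield M) (x : M) : x ^ 2 + T ≠ 0 :=
  fun h => hT (CharTwo.add_eq_zero.1 h ▸ sq_mem_squareSubfield x)

theorem zpow_mem_squareSubfield_of_even (T : M) {n : ℤ} (hn : Even n) :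
    T ^ n ∈ squareSubfield M := by
  obtain ⟨k, rfl⟩ := hn
  rw [← two_mul, zpow_mul', zpow_ofNat]
  exact sq_mem_squareSubfield _

theorem zpow_mem_squareSubfield_iff {T : M} (hT : T ∉ squareSubfield M) {n : ℤ} :
    T ^ n ∈ squareSubfield M ↔ Even n := by
  refine ⟨fun h => ?_, zpow_mem_squareSubfield_of_even T⟩
  by_contra hn
  obtain ⟨k, rfl⟩ := Int.not_even_iff_odd.1 hn
  have hTk : T ^ k ≠ 0 := zpow_ne_zero k (ne_zero_of_notMem_squareSubfield hT)
  have hT_eq : T = T ^ (2 * k + 1) / (T ^ k) ^ 2 := by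
    rw [zpow_add_one₀ (ne_zero_of_notMem_squareSubfield hT), zpow_mul', zpow_ofNat]
    field_simp
  exact hT (hT_eq ▸ div_mem h (sq_mem_squareSubfield _))

theorem zpow_notMem_squareSubfield {T : M} (hT : T ∉ squareSubfield M) {n : ℤ} (hn : Odd n) :
    T ^ n ∉ squareSubfield M := by
  rwa [zpow_mem_squareSubfield_iff hT, Int.not_even_iff_odd]

theorem zpow_sub_zpow_neg_notMem_squareSubfield {T : M} (hT : T ∉ squareSubfield M) {n : ℤ}
    (hn : Odd n) : T ^ n - T ^ (-n) ∉ squareSubfield M := by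
  have hTn : T ^ n ≠ 0 := zpow_ne_zero n (ne_zero_of_notMem_squareSubfield hT)
  have h1 : T ^ n - 1 ≠ 0 :=
    sub_ne_zero.2 fun h => zpow_notMem_squareSubfield hT hn (h ▸ one_mem _)
  have hfactor : T ^ n - T ^ (-n) = T ^ (-n) * (T ^ n - 1) ^ 2 := by
    rw [zpow_neg]
    field_simp
    linear_combination (T ^ n - 1) * CharTwo.two_eq_zero (R := M)
  intro h
  apply zpow_notMem_squareSubfield hT hn.neg
  rw [hfactor] at h
  simpa [h1] using div_mem h (sq_mem_squareSubfield (T ^ n - 1))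

theorem shiftSum_mem_squareSubfield (T : M) {s r : ℕ} (hs : s ≠ 0) (hr : r ≠ 0) :
    shiftSum T s r ∈ squareSubfield M := by
  obtain ⟨s, rfl⟩ := Nat.exists_eq_succ_of_ne_zero hs
  obtain ⟨r, rfl⟩ := Nat.exists_eq_succ_of_ne_zero hr
  rw [shiftSum_succ]
  exact sq_mem_squareSubfield _

theorem shiftSum_zero_sub_mem (T : M) {r : ℕ} (hr : r ≠ 0) :
    shiftSum T 0 r - T ∈ squareSubfield M := by
  rw [shiftSum, pow_zero, zpow_one, add_sub_cancel_right]
  exact zpow_mem_squareSubfield_of_even T (by simp [Int.even_sub, Int.even_pow, hr])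

theorem shiftSum_sub_zpow_mem (T : M) {s : ℕ} (hs : s ≠ 0) :
    shiftSum T s 0 - T ^ ((2 : ℤ) ^ (s + 1) - 1) ∈ squareSubfield M := by
  rw [shiftSum, pow_zero, add_sub_cancel_left]
  exact zpow_mem_squareSubfield_of_even T (by simp [Int.even_pow, hs])

theorem frobenius_sq_add (x T : M) (r : ℕ) :
    (x ^ 2 + T) ^ 2 ^ r = (x ^ 2 ^ r) ^ 2 + T ^ 2 ^ r := by
  rw [add_pow_char_pow (p := 2), ← pow_mul, ← pow_mul, mul_comm]

theorem frobenius_div (x T : M) (r : ℕ) :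
    ((x ^ 2 + T ^ 2 + T) / (x ^ 2 + T)) ^ 2 ^ r =
      ((x ^ 2 ^ r) ^ 2 + T ^ 2 ^ (r + 1) + T ^ 2 ^ r) / ((x ^ 2 ^ r) ^ 2 + T ^ 2 ^ r) := by
  rw [div_pow, frobenius_sq_add, add_pow_char_pow (p := 2), frobenius_sq_add]
  ring

theorem sq_add_div_mul_eq {A B X Y : M} (hA : A ≠ 0) (hX : X ^ 2 + A ≠ 0) (hY : Y ^ 2 + B ≠ 0)
    (h : (Y ^ 2 + B ^ 2 + B) / (Y ^ 2 + B) = (X ^ 2 + A ^ 2 + A) / (X ^ 2 + A)) :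
    (Y + B / A * X) ^ 2 = B ^ 2 / A + B := by
  rw [div_eq_div_iff hY hX] at h
  field_simp
  linear_combination h + (A ^ 2 * Y ^ 2 + A * B * X * Y - A * B ^ 2) * CharTwo.two_eq_zero (R := M)

theorem sq_add_shiftTerm_eq {T x y : M} {s r : ℕ} (hT : T ≠ 0) (hx : x ^ 2 + T ≠ 0)
    (hy : y ^ 2 + T ^ 2 ^ s ≠ 0)
    (h : (y ^ 2 + T ^ 2 ^ (s + 1) + T ^ 2 ^ s) / (y ^ 2 + T ^ 2 ^ s) =
      ((x ^ 2 + T ^ 2 + T) / (x ^ 2 + T)) ^ 2 ^ r) :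
    (y + shiftTerm T x s r) ^ 2 = shiftSum T s r := by
  have hzpow (a b : ℕ) : T ^ ((2 : ℤ) ^ a - 2 ^ b) = T ^ 2 ^ a / T ^ 2 ^ b := by
    rw [zpow_sub₀ hT]; norm_cast
  have hsq (n : ℕ) : T ^ 2 ^ (n + 1) = (T ^ 2 ^ n) ^ 2 := by rw [pow_succ, pow_mul]
  rw [frobenius_div, hsq, hsq] at h
  have hx' : (x ^ 2 ^ r) ^ 2 + T ^ 2 ^ r ≠ 0 := by
    rw [← frobenius_sq_add]; exact pow_ne_zero _ hx
  rw [shiftTerm, shiftSum, hzpow, hzpow, hsq, sq_add_div_mul_eq (pow_ne_zero _ hT) hx' hy h]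
  norm_cast

theorem exists_eq_shiftSum_of_sq_eq {T z : M} (hT : T ∉ squareSubfield M) {s r : ℕ} (hrs : r ≠ s)
    (h : z ^ 2 = shiftSum T s r) : ∃ σ ρ, s = σ + 1 ∧ r = ρ + 1 ∧ z = shiftSum T σ ρ := by
  have hz : shiftSum T s r ∈ squareSubfield M := h ▸ sq_mem_squareSubfield z
  obtain ⟨σ, rfl⟩ : ∃ σ, s = σ + 1 := by
    refine Nat.exists_eq_succ_of_ne_zero fun hs => ?_
    subst hs
    exact hT (by simpa using sub_mem hz (shiftSum_zero_sub_mem T hrs))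
  obtain ⟨ρ, rfl⟩ : ∃ ρ, r = ρ + 1 := by
    refine Nat.exists_eq_succ_of_ne_zero fun hr => ?_
    subst hr
    refine zpow_notMem_squareSubfield hT (n := (2 : ℤ) ^ (σ + 1 + 1) - 1) ?_ ?_
    · simp [Int.even_pow]
    · simpa using sub_mem hz (shiftSum_sub_zpow_mem T σ.succ_ne_zero)
  exact ⟨σ, ρ, rfl, rfl, CharTwo.sq_injective (h.trans (shiftSum_succ T σ ρ))⟩

theorem eq_pow_or_exists_shift {T x y : M} (hT : T ∉ squareSubfield M) {s r : ℕ}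
    (hx : x ^ 2 + T ≠ 0) (hy : y ^ 2 + T ^ 2 ^ s ≠ 0)
    (h : (y ^ 2 + T ^ 2 ^ (s + 1) + T ^ 2 ^ s) / (y ^ 2 + T ^ 2 ^ s) =
      ((x ^ 2 + T ^ 2 + T) / (x ^ 2 + T)) ^ 2 ^ r) :
    y = x ^ 2 ^ s ∨
      ∃ σ ρ, s = σ + 1 ∧ r = ρ + 1 ∧ ρ ≠ σ ∧ y + shiftTerm T x s r = shiftSum T σ ρ := by
  have key := sq_add_shiftTerm_eq (ne_zero_of_notMem_squareSubfield hT) hx hy h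
  by_cases hrs : r = s
  · subst hrs
    rw [shiftSum_self, shiftTerm, sub_self, zpow_zero, one_mul, pow_eq_zero_iff two_ne_zero,
      CharTwo.add_eq_zero] at key
    exact Or.inl key
  · obtain ⟨σ, ρ, rfl, rfl, hz⟩ := exists_eq_shiftSum_of_sq_eq hT hrs key
    exact Or.inr ⟨σ, ρ, rfl, rfl, by omega, hz⟩

theorem shiftSum_sub_shiftSum_inv_notMem {t : M} (ht : t ∉ squareSubfield M) {σ ρ γ : ℕ}
    (hρ : ρ ≠ σ) (hγ : γ ≠ σ) (h0 : σ = 0 ∨ ρ = 0 ∨ γ = 0) :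
    shiftSum t σ ρ - shiftSum t⁻¹ σ γ ∉ squareSubfield M := by
  have hti := inv_notMem_squareSubfield ht
  rcases eq_or_ne σ 0 with rfl | hσ
  · refine notMem_of_sub_mem (zpow_sub_zpow_neg_notMem_squareSubfield ht odd_one) ?_
    convert sub_mem (shiftSum_zero_sub_mem t hρ) (shiftSum_zero_sub_mem t⁻¹ hγ) using 1
    rw [zpow_one, zpow_neg_one]
    ring
  have hn : Odd ((2 : ℤ) ^ (σ + 1) - 1) := by simp [Int.even_pow]
  rcases eq_or_ne ρ 0 with rfl | hρ0 <;> rcases eq_or_ne γ 0 with rfl | hγ0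
  · refine notMem_of_sub_mem (zpow_sub_zpow_neg_notMem_squareSubfield ht hn) ?_
    convert sub_mem (shiftSum_sub_zpow_mem t hσ) (shiftSum_sub_zpow_mem t⁻¹ hσ) using 1
    rw [inv_zpow']
    ring
  · refine notMem_of_sub_mem (zpow_notMem_squareSubfield ht hn) ?_
    convert sub_mem (shiftSum_sub_zpow_mem t hσ) (shiftSum_mem_squareSubfield t⁻¹ hσ hγ0) using 1
    ring
  · refine notMem_of_sub_mem (neg_mem_iff.not.2 (zpow_notMem_squareSubfield hti hn)) ?_
    convert sub_mem (shiftSum_mem_squareSubfield t hσ hρ0) (shiftSum_sub_zpow_mem t⁻¹ hσ) using 1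
    ring
  · simp [hσ, hρ0, hγ0] at h0

theorem shiftTerm_sub_shiftTerm_inv_ne {t : M} (ht : t ∉ squareSubfield M) (x : M) {σ ρ γ : ℕ}
    (hρ : ρ ≠ σ) (hγ : γ ≠ σ) :
    shiftTerm t x (σ + 1) (ρ + 1) - shiftTerm t⁻¹ x (σ + 1) (γ + 1) ≠
      shiftSum t σ ρ - shiftSum t⁻¹ σ γ := by
  have base {σ ρ γ : ℕ} (hρ : ρ ≠ σ) (hγ : γ ≠ σ) (h0 : σ = 0 ∨ ρ = 0 ∨ γ = 0) :
      shiftTerm t x (σ + 1) (ρ + 1) - shiftTerm t⁻¹ x (σ + 1) (γ + 1) ≠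
        shiftSum t σ ρ - shiftSum t⁻¹ σ γ := fun h =>
    shiftSum_sub_shiftSum_inv_notMem ht hρ hγ h0 <| h ▸ by
      rw [shiftTerm_succ, shiftTerm_succ]
      exact sub_mem (sq_mem_squareSubfield _) (sq_mem_squareSubfield _)
  induction σ generalizing ρ γ with
  | zero => exact base hρ hγ (Or.inl rfl)
  | succ σ ih =>
    rcases ρ with _ | ρ
    · exact base hρ hγ (Or.inr (Or.inl rfl))
    rcases γ with _ | γ
    · exact base hρ hγ (Or.inr (Or.inr rfl))
    rw [shiftTerm_succ t, shiftTerm_succ t⁻¹, shiftSum_succ t, shiftSum_succ t⁻¹,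
      ← sub_pow_char, ← sub_pow_char]
    exact fun h => ih (by omega) (by omega) (CharTwo.sq_injective h)

end CharTwo

theorem stmt_18_general {F M : Type*} [Field F] [Field M] [Algebra F M]
    [CharP F 2]
    (t : M)
    (hnp : ¬∃ c : M, c ^ 2 = t)
    (x y : M) (s : ℕ) :
    (∃ (j r : ℕ) (u ut v vt : M),
      x ^ 2 + t ≠ 0 ∧ x ^ 2 + t⁻¹ ≠ 0 ∧
      y ^ 2 + t ^ 2 ^ s ≠ 0 ∧ y ^ 2 + t⁻¹ ^ 2 ^ s ≠ 0 ∧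
      u = (x ^ 2 + t ^ 2 + t) / (x ^ 2 + t) ∧
      ut = (x ^ 2 + t⁻¹ ^ 2 + t⁻¹) / (x ^ 2 + t⁻¹) ∧
      v = (y ^ 2 + t ^ 2 ^ (s + 1) + t ^ 2 ^ s) / (y ^ 2 + t ^ 2 ^ s) ∧
      vt = (y ^ 2 + t⁻¹ ^ 2 ^ (s + 1) + t⁻¹ ^ 2 ^ s) / (y ^ 2 + t⁻¹ ^ 2 ^ s) ∧
      v = u ^ 2 ^ r ∧ vt = ut ^ 2 ^ j)
    ↔ y = x ^ 2 ^ s := by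
  have : CharP M 2 := charP_of_injective_algebraMap (algebraMap F M).injective 2
  have ht : t ∉ squareSubfield M := fun h => hnp (mem_squareSubfield.1 h)
  have hti := inv_notMem_squareSubfield ht
  constructor
  · rintro ⟨j, r, u, ut, v, vt, hx, hxi, hy, hyi, rfl, rfl, rfl, rfl, hr, hj⟩
    obtain hyx | ⟨σ, ρ, rfl, rfl, hρ, h₁⟩ := eq_pow_or_exists_shift ht hx hy hr
    · exact hyx
    obtain hyx | ⟨σ', γ, hσ, rfl, hγ, h₂⟩ := eq_pow_or_exists_shift hti hxi hyi hj
    · exact hyx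
    obtain rfl := Nat.succ_injective hσ
    exact absurd (by linear_combination h₁ - h₂) (shiftTerm_sub_shiftTerm_inv_ne ht x hρ hγ)
  · rintro rfl
    have hy {T : M} (hT : T ∉ squareSubfield M) : (x ^ 2 ^ s) ^ 2 + T ^ 2 ^ s ≠ 0 := by
      rw [← frobenius_sq_add]
      exact pow_ne_zero _ (sq_add_ne_zero hT x)
    exact ⟨s, s, _, _, _, _, sq_add_ne_zero ht x, sq_add_ne_zero hti x, hy ht, hy hti,
      rfl, rfl, rfl, rfl, (frobenius_div x t s).symm, (frobenius_div x t⁻¹ s).symm⟩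

/-- Let `F` be algebraically closed of characteristic `2`, `M` a function field over
`F`, and `t ∈ M` transcendental over `F`, not a square in `M`, with all zeros and poles
of `t` simple. Then for `x, y ∈ M` and `s : ℕ`, the system `E2` is solvable in `M` if
and only if `y = x^{2^s}`. -/
theorem stmt_18 {F M : Type*} [Field F] [Field M] [Algebra F M] [IsAlgClosed F]
    [CharP F 2]
    (t : M) (htrans : Transcendental F t)
    (hfin : FiniteDimensional (IntermediateField.adjoin F {t}) M)
    (hnp : ¬∃ c : M, c ^ 2 = t)
    (hsimple : ∀ P : FFPrime F M, P.v t ∈ ({-1, 0, 1} : Set ℤ))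
    (x y : M) (s : ℕ) :
    (∃ (j r : ℕ) (u ut v vt : M),
      x ^ 2 + t ≠ 0 ∧ x ^ 2 + t⁻¹ ≠ 0 ∧
      y ^ 2 + t ^ 2 ^ s ≠ 0 ∧ y ^ 2 + t⁻¹ ^ 2 ^ s ≠ 0 ∧
      u = (x ^ 2 + t ^ 2 + t) / (x ^ 2 + t) ∧
      ut = (x ^ 2 + t⁻¹ ^ 2 + t⁻¹) / (x ^ 2 + t⁻¹) ∧
      v = (y ^ 2 + t ^ 2 ^ (s + 1) + t ^ 2 ^ s) / (y ^ 2 + t ^ 2 ^ s) ∧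
      vt = (y ^ 2 + t⁻¹ ^ 2 ^ (s + 1) + t⁻¹ ^ 2 ^ s) / (y ^ 2 + t⁻¹ ^ 2 ^ s) ∧
      v = u ^ 2 ^ r ∧ vt = ut ^ 2 ^ j)
    ↔ y = x ^ 2 ^ s :=
  stmt_18_general (F := F) t hnp x y s
end
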